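/- For tuples ā, b̄ in a colored graph G: if the local k-types of ā and b̄ in G coincide (i.e., ā and b̄ satisfy exactly the same local formulas of quantifier rank at most k), then Duplicator has a winning strategy in the k-round local EF-game from position (G, ā, b̄). -/
import Mathlib


open FirstOrder FirstOrder.Language

/-- Relation symbols of the language of `κ`-colored graphs. -/
inductive ColRel (κ : Type) : ℕ → Type
  | color (c : κ) : ColRel κ 1
  | adj : ColRel κ 2

/-- The first-order language of `κ`-colored graphs. -/
def colLang (κ : Type) : Language where
  Functions := fun _ => Empty
  Relations := ColRel κ

/-- The `colLang κ`-structure on a colored graph `(G, col)`. -/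
def colStruct {V κ : Type} (G : SimpleGraph V) (col : V → κ → Prop) :
    (colLang κ).Structure V where
  funMap := fun f _ => f.elim
  RelMap := fun R x =>
    match R with
    | ColRel.color c => col (x 0) c
    | ColRel.adj => G.Adj (x 0) (x 1)

/-- The quantifier rank of a first-order formula. -/
def qr {L : Language} {α : Type*} : {n : ℕ} → L.BoundedFormula α n → ℕ
  | _, BoundedFormula.falsum => 0
  | _, BoundedFormula.equal _ _ => 0
  | _, BoundedFormula.rel _ _ => 0
  | _, BoundedFormula.imp f g => max (qr f) (qr g)
  | _, BoundedFormula.all f => qr f + 1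

/-- Disjunction of bounded formulas. -/
def orF {L : Language} {α : Type*} {n : ℕ} (f g : L.BoundedFormula α n) :
    L.BoundedFormula α n :=
  f.not.imp g

/-- Conjunction of bounded formulas. -/
def andF {L : Language} {α : Type*} {n : ℕ} (f g : L.BoundedFormula α n) :
    L.BoundedFormula α n :=
  (f.imp g.not).not

/-- Finite disjunction. -/
def bigOr {L : Language} {α : Type*} {n : ℕ} (l : List (L.BoundedFormula α n)) :
    L.BoundedFormula α n :=
  l.foldr orF BoundedFormula.falsum

/-- The atomic edge formula `E(t₁, t₂)`. -/
def adjF {κ : Type} {α : Type} {n : ℕ}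
    (t₁ t₂ : (colLang κ).Term (α ⊕ Fin n)) : (colLang κ).BoundedFormula α n :=
  BoundedFormula.rel (ColRel.adj : (colLang κ).Relations 2) ![t₁, t₂]

/-- `distF κ k t₁ t₂` expresses `dist(t₁, t₂) ≤ 2^k`, using `k` quantifiers:
the base case is `E(t₁,t₂) ∨ t₁ = t₂` and the recursion quantifies a midpoint. -/
def distF (κ : Type) {α : Type} : (k : ℕ) → {n : ℕ} →
    (colLang κ).Term (α ⊕ Fin n) → (colLang κ).Term (α ⊕ Fin n) →
    (colLang κ).BoundedFormula α n
  | 0, _, t₁, t₂ => orF (adjF t₁ t₂) (t₁.bdEqual t₂)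
  | (k + 1), n, t₁, t₂ =>
      (andF (distF κ k (Term.var (Sum.inr (Fin.last n))) (t₁.liftAt 1 n))
            (distF κ k (Term.var (Sum.inr (Fin.last n))) (t₂.liftAt 1 n))).ex

/-- The guard formula: the newly quantified variable (the last of the `n+1`
bound variables) lies within distance `2^K` of one of the free variables
(from `Fin m`) or of one of the previously bound variables. -/
def guardF (κ : Type) (m n K : ℕ) : (colLang κ).BoundedFormula (Fin m) (n + 1) :=
  bigOr
    (((List.finRange m).map fun i =>
        distF κ K (Term.var (Sum.inr (Fin.last n))) (Term.var (Sum.inl i))) ++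
     ((List.finRange n).map fun j =>
        distF κ K (Term.var (Sum.inr (Fin.last n))) (Term.var (Sum.inr j.castSucc))))

/-- The localization of a formula: each quantifier over a subformula of
quantifier rank `k` is restricted to the `2^{k-1}`-neighborhood of the current
variables (so `∀x ψ` with `qr (∀x ψ) = qr ψ + 1` becomes
`∀x ∈ N_{2^{qr ψ}}[ȳ] ψ`, and dually for `∃`, which is `¬∀¬`). -/
def loc {κ : Type} {m : ℕ} : {n : ℕ} →
    (colLang κ).BoundedFormula (Fin m) n → (colLang κ).BoundedFormula (Fin m) n
  | _, BoundedFormula.falsum => BoundedFormula.falsum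
  | _, BoundedFormula.equal t u => BoundedFormula.equal t u
  | _, BoundedFormula.rel R ts => BoundedFormula.rel R ts
  | _, BoundedFormula.imp f g => BoundedFormula.imp (loc f) (loc g)
  | n, BoundedFormula.all f => BoundedFormula.all ((guardF κ m n (qr f)).imp (loc f))

/-- A formula is local if it is the localization of some formula. -/
def IsLocal {κ : Type} {m : ℕ} (φ : (colLang κ).Formula (Fin m)) : Prop :=
  ∃ ψ, φ = loc ψ

/-- `x` lies in the closed `r`-ball around `c` in `G`. -/
def inBall {V : Type} (G : SimpleGraph V) (c : V) (r : ℕ) (x : V) : Prop :=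
  ∃ p : G.Walk c x, p.length ≤ r

/-- `x` lies in the closed `r`-ball around the tuple `a` in `G`. -/
def inBallT {V : Type} (G : SimpleGraph V) {n : ℕ} (a : Fin n → V) (r : ℕ)
    (x : V) : Prop :=
  ∃ i, inBall G (a i) r x

/-- Tuples `a`, `b` define a partial automorphism of `(G, col)`. -/
def IsPartialAuto {V κ : Type} (G : SimpleGraph V) (col : V → κ → Prop) {n : ℕ}
    (a b : Fin n → V) : Prop :=
  ∀ i j : Fin n,
    (a i = a j ↔ b i = b j) ∧ (∀ c, col (a i) c ↔ col (b i) c) ∧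
    (G.Adj (a i) (a j) ↔ G.Adj (b i) (b j))

/-- Duplicator wins the `k`-round local EF-game from `(G, a, b, k)`. -/
def DWinsLocal {V κ : Type} (G : SimpleGraph V) (col : V → κ → Prop) :
    (k : ℕ) → {n : ℕ} → (Fin n → V) → (Fin n → V) → Prop
  | 0, _, a, b => IsPartialAuto G col a b
  | (k + 1), _, a, b =>
      (∀ x : V, inBallT G a (2 ^ k) x → ∃ y : V, inBallT G b (2 ^ k) y ∧
        DWinsLocal G col k (Fin.snoc a x) (Fin.snoc b y)) ∧
      (∀ y : V, inBallT G b (2 ^ k) y → ∃ x : V, inBallT G a (2 ^ k) x ∧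
        DWinsLocal G col k (Fin.snoc a x) (Fin.snoc b y))

namespace LocalEFAux

open FirstOrder FirstOrder.Language SimpleGraph

variable {V κ : Type} (G : SimpleGraph V) (col : V → κ → Prop)

/-- Realization of a bounded formula in the colored-graph structure. -/
def Rz {m n : ℕ} (φ : (colLang κ).BoundedFormula (Fin m) n)
    (v : Fin m → V) (xs : Fin n → V) : Prop :=
  letI := colStruct G col
  φ.Realize v xs

/-- Realization of a term in the colored-graph structure. -/
def rt {m n : ℕ} (t : (colLang κ).Term (Fin m ⊕ Fin n))
    (v : Fin m → V) (xs : Fin n → V) : V :=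
  letI := colStruct G col
  t.realize (Sum.elim v xs)

variable {m n : ℕ}

theorem Rz_falsum {v : Fin m → V} {xs : Fin n → V} :
    Rz G col (BoundedFormula.falsum : (colLang κ).BoundedFormula (Fin m) n) v xs ↔ False :=
  Iff.rfl

theorem Rz_imp {f g : (colLang κ).BoundedFormula (Fin m) n} {v xs} :
    Rz G col (f.imp g) v xs ↔ (Rz G col f v xs → Rz G col g v xs) :=
  Iff.rfl

theorem Rz_not {f : (colLang κ).BoundedFormula (Fin m) n} {v xs} :
    Rz G col f.not v xs ↔ ¬ Rz G col f v xs :=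
  Iff.rfl

theorem Rz_all {f : (colLang κ).BoundedFormula (Fin m) (n + 1)} {v xs} :
    Rz G col f.all v xs ↔ ∀ z, Rz G col f v (Fin.snoc xs z) :=
  Iff.rfl

theorem Rz_ex {f : (colLang κ).BoundedFormula (Fin m) (n + 1)} {v xs} :
    Rz G col f.ex v xs ↔ ∃ z, Rz G col f v (Fin.snoc xs z) := by
  show (¬ ∀ z, ¬ Rz G col f v (Fin.snoc xs z)) ↔ _
  exact not_forall_not

theorem Rz_orF {f g : (colLang κ).BoundedFormula (Fin m) n} {v xs} :
    Rz G col (orF f g) v xs ↔ (Rz G col f v xs ∨ Rz G col g v xs) := by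
  show ((Rz G col f v xs → False) → Rz G col g v xs) ↔ _
  tauto

theorem Rz_andF {f g : (colLang κ).BoundedFormula (Fin m) n} {v xs} :
    Rz G col (andF f g) v xs ↔ (Rz G col f v xs ∧ Rz G col g v xs) := by
  show ¬ (Rz G col f v xs → ¬ Rz G col g v xs) ↔ _
  tauto

theorem Rz_equal {t u : (colLang κ).Term (Fin m ⊕ Fin n)} {v xs} :
    Rz G col (BoundedFormula.equal t u) v xs ↔ rt G col t v xs = rt G col u v xs :=
  Iff.rfl

theorem Rz_adjF {t u : (colLang κ).Term (Fin m ⊕ Fin n)} {v xs} :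
    Rz G col (adjF t u) v xs ↔ G.Adj (rt G col t v xs) (rt G col u v xs) := by
  letI := colStruct G col
  show G.Adj (Term.realize (Sum.elim v xs) (![t, u] 0)) (Term.realize (Sum.elim v xs) (![t, u] 1)) ↔ _
  simp only [Matrix.cons_val_zero, Matrix.cons_val_one, Matrix.head_cons]
  rfl

theorem Rz_colorF {c : κ} {t : (colLang κ).Term (Fin m ⊕ Fin n)} {v xs} :
    Rz G col (BoundedFormula.rel (ColRel.color c) ![t]) v xs ↔ col (rt G col t v xs) c := by
  letI := colStruct G col
  show col (Term.realize (Sum.elim v xs) (![t] 0)) c ↔ _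
  simp only [Matrix.cons_val_zero]
  rfl

theorem rt_var_inl {i : Fin m} {v : Fin m → V} {xs : Fin n → V} :
    rt G col (Term.var (Sum.inl i)) v xs = v i := rfl

theorem rt_var_inr {j : Fin n} {v : Fin m → V} {xs : Fin n → V} :
    rt G col (Term.var (Sum.inr j)) v xs = xs j := rfl

theorem rt_var_last {v : Fin m → V} {xs : Fin n → V} {z : V} :
    rt G col (Term.var (Sum.inr (Fin.last n))) v (Fin.snoc xs z) = z := by
  show (Fin.snoc xs z : Fin (n+1) → V) (Fin.last n) = z
  simp

theorem rt_var_castSucc {j : Fin n} {v : Fin m → V} {xs : Fin n → V} {z : V} :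
    rt G col (Term.var (Sum.inr j.castSucc)) v (Fin.snoc xs z) = xs j := by
  show (Fin.snoc xs z : Fin (n+1) → V) j.castSucc = xs j
  simp

theorem rt_liftAt {t : (colLang κ).Term (Fin m ⊕ Fin n)} {v : Fin m → V}
    {xs : Fin n → V} {z : V} :
    rt G col (t.liftAt 1 n) v (Fin.snoc xs z) = rt G col t v xs := by
  letI := colStruct G col
  show Term.realize _ _ = Term.realize _ _
  rw [Term.realize_liftAt]
  congr 1
  funext a
  rcases a with a | i
  · rfl
  · simp only [Sum.elim_inr, Function.comp_apply, Sum.map_inr, i.isLt, if_true]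
    exact @Fin.snoc_castSucc n (fun _ => V) z xs i

theorem walk_split : ∀ (s t : ℕ) {u w : V} (p : G.Walk u w), p.length ≤ s + t →
    ∃ m : V, (∃ q : G.Walk u m, q.length ≤ s) ∧ ∃ r : G.Walk m w, r.length ≤ t := by
  intro s
  induction s with
  | zero =>
    intro t u w p hp
    exact ⟨u, ⟨Walk.nil, le_rfl⟩, ⟨p, by simpa using hp⟩⟩
  | succ s IH =>
    intro t u w p hp
    cases p with
    | nil => exact ⟨u, ⟨Walk.nil, by simp⟩, ⟨Walk.nil, by simp⟩⟩
    | cons h q =>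
      obtain ⟨mid, ⟨q1, hq1⟩, hr⟩ := IH t q (by
        have := hp
        simp only [Walk.length_cons] at this
        omega)
      exact ⟨mid, ⟨Walk.cons h q1, by simpa [Walk.length_cons] using Nat.succ_le_succ hq1⟩, hr⟩

theorem Rz_distF : ∀ (K : ℕ) {m n : ℕ} (t₁ t₂ : (colLang κ).Term (Fin m ⊕ Fin n))
    (v : Fin m → V) (xs : Fin n → V),
    Rz G col (distF κ K t₁ t₂) v xs ↔
      ∃ p : G.Walk (rt G col t₁ v xs) (rt G col t₂ v xs), p.length ≤ 2 ^ K := by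
  intro K
  induction K with
  | zero =>
    intro m n t₁ t₂ v xs
    rw [show distF κ 0 t₁ t₂ = orF (adjF t₁ t₂) (t₁.bdEqual t₂) from rfl, Rz_orF]
    constructor
    · rintro (hadj | heq)
      · rw [Rz_adjF] at hadj
        exact ⟨hadj.toWalk, by simp [Adj.toWalk]⟩
      · have he : rt G col t₁ v xs = rt G col t₂ v xs := (Rz_equal G col).mp heq
        exact ⟨Walk.nil.copy rfl he, by simp⟩
    · rintro ⟨p, hp⟩
      rw [pow_zero] at hp
      rcases Nat.le_one_iff_eq_zero_or_eq_one.mp hp with h0 | h1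
      · right
        exact (Rz_equal G col).mpr (Walk.eq_of_length_eq_zero h0)
      · left
        exact (Rz_adjF G col).mpr (Walk.adj_of_length_eq_one h1)
  | succ K IH =>
    intro m n t₁ t₂ v xs
    rw [show distF κ (K+1) t₁ t₂ =
      (andF (distF κ K (Term.var (Sum.inr (Fin.last n))) (t₁.liftAt 1 n))
            (distF κ K (Term.var (Sum.inr (Fin.last n))) (t₂.liftAt 1 n))).ex from rfl, Rz_ex]
    have hz : ∀ z : V,
        Rz G col (andF (distF κ K (Term.var (Sum.inr (Fin.last n))) (t₁.liftAt 1 n))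
            (distF κ K (Term.var (Sum.inr (Fin.last n))) (t₂.liftAt 1 n))) v (Fin.snoc xs z) ↔
          ((∃ p : G.Walk z (rt G col t₁ v xs), p.length ≤ 2 ^ K) ∧
           (∃ q : G.Walk z (rt G col t₂ v xs), q.length ≤ 2 ^ K)) := by
      intro z
      rw [Rz_andF, IH, IH, rt_var_last, rt_liftAt, rt_liftAt]
    rw [exists_congr hz]
    constructor
    · rintro ⟨z, ⟨p, hp⟩, ⟨q, hq⟩⟩
      refine ⟨p.reverse.append q, ?_⟩
      rw [Walk.length_append, Walk.length_reverse, pow_succ, mul_two]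
      omega
    · rintro ⟨p, hp⟩
      obtain ⟨mid, ⟨q, hq⟩, ⟨r, hr⟩⟩ := walk_split G (2^K) (2^K) p (by
        rw [pow_succ, mul_two] at hp; exact hp)
      exact ⟨mid, ⟨q.reverse, by simpa using hq⟩, ⟨r, hr⟩⟩

theorem Rz_bigOr {l : List ((colLang κ).BoundedFormula (Fin m) n)} {v xs} :
    Rz G col (bigOr l) v xs ↔ ∃ f ∈ l, Rz G col f v xs := by
  induction l with
  | nil => simpa [bigOr] using (Rz_falsum G col (v := v) (xs := xs))
  | cons f l IH =>
    rw [show bigOr (f :: l) = orF f (bigOr l) from rfl, Rz_orF, IH]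
    simp

theorem inBallT_append {v : Fin m → V} {xs : Fin n → V} {r : ℕ} {z : V} :
    inBallT G (Fin.append v xs) r z ↔
      (∃ i, inBall G (v i) r z) ∨ ∃ j, inBall G (xs j) r z := by
  constructor
  · rintro ⟨i, hi⟩
    revert hi
    refine Fin.addCases (motive := fun i =>
      inBall G (Fin.append v xs i) r z → (∃ i, inBall G (v i) r z) ∨ ∃ j, inBall G (xs j) r z)
      (fun i hi => ?_) (fun j hj => ?_) i
    · rw [Fin.append_left] at hi; exact Or.inl ⟨i, hi⟩
    · rw [Fin.append_right] at hj; exact Or.inr ⟨j, hj⟩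
  · rintro (⟨i, hi⟩ | ⟨j, hj⟩)
    · exact ⟨Fin.castAdd n i, by rwa [Fin.append_left]⟩
    · exact ⟨Fin.natAdd m j, by rwa [Fin.append_right]⟩

theorem Rz_guardF {K : ℕ} {v : Fin m → V} {xs : Fin n → V} {z : V} :
    Rz G col (guardF κ m n K) v (Fin.snoc xs z) ↔
      inBallT G (Fin.append v xs) (2 ^ K) z := by
  rw [guardF, Rz_bigOr, inBallT_append]
  constructor
  · rintro ⟨f, hf, hrz⟩
    rcases List.mem_append.mp hf with hf | hf <;>
      obtain ⟨i, -, rfl⟩ := List.mem_map.mp hf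
    · rw [Rz_distF, rt_var_last, rt_var_inl] at hrz
      obtain ⟨p, hp⟩ := hrz
      exact Or.inl ⟨i, p.reverse, by simpa using hp⟩
    · rw [Rz_distF, rt_var_last, rt_var_castSucc] at hrz
      obtain ⟨p, hp⟩ := hrz
      exact Or.inr ⟨i, p.reverse, by simpa using hp⟩
  · rintro (⟨i, p, hp⟩ | ⟨j, p, hp⟩)
    · refine ⟨distF κ K (Term.var (Sum.inr (Fin.last n))) (Term.var (Sum.inl i)),
        List.mem_append.mpr (Or.inl (List.mem_map.mpr ⟨i, List.mem_finRange i, rfl⟩)), ?_⟩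
      rw [Rz_distF, rt_var_last, rt_var_inl]
      exact ⟨p.reverse, by simpa using hp⟩
    · refine ⟨distF κ K (Term.var (Sum.inr (Fin.last n))) (Term.var (Sum.inr j.castSucc)),
        List.mem_append.mpr (Or.inr (List.mem_map.mpr ⟨j, List.mem_finRange j, rfl⟩)), ?_⟩
      rw [Rz_distF, rt_var_last, rt_var_castSucc]
      exact ⟨p.reverse, by simpa using hp⟩

/-! ### Quantifier rank and localization lemmas -/

theorem qr_not {f : (colLang κ).BoundedFormula (Fin m) n} : qr f.not = qr f := by
  show qr (f.imp _) = qr f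
  show max (qr f) (qr (BoundedFormula.falsum : (colLang κ).BoundedFormula (Fin m) n)) = qr f
  simp [qr]

theorem qr_orF {f g : (colLang κ).BoundedFormula (Fin m) n} :
    qr (orF f g) = max (qr f) (qr g) := by
  show max (qr f.not) _ = _
  rw [qr_not]

theorem qr_andF {f g : (colLang κ).BoundedFormula (Fin m) n} :
    qr (andF f g) = max (qr f) (qr g) := by
  show qr ((f.imp g.not).not) = _
  rw [qr_not]
  show max (qr f) (qr g.not) = _
  rw [qr_not]

theorem qr_ex {f : (colLang κ).BoundedFormula (Fin m) (n + 1)} :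
    qr f.ex = qr f + 1 := by
  show qr (f.not.all.not) = _
  rw [qr_not]
  show qr f.not + 1 = _
  rw [qr_not]

theorem qr_bigOr_le {l : List ((colLang κ).BoundedFormula (Fin m) n)} {K : ℕ}
    (h : ∀ f ∈ l, qr f ≤ K) : qr (bigOr l) ≤ K := by
  induction l with
  | nil => simp [bigOr, qr]
  | cons f l IH =>
    show qr (orF f (bigOr l)) ≤ K
    rw [qr_orF]
    exact max_le (h f (by simp)) (IH fun g hg => h g (by simp [hg]))

theorem qr_distF : ∀ (K : ℕ) {m n : ℕ} (t₁ t₂ : (colLang κ).Term (Fin m ⊕ Fin n)),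
    qr (distF κ K t₁ t₂) = K := by
  intro K
  induction K with
  | zero =>
    intro m n t₁ t₂
    rw [show distF κ 0 t₁ t₂ = orF (adjF t₁ t₂) (t₁.bdEqual t₂) from rfl, qr_orF]
    simp [qr, adjF, Term.bdEqual]
  | succ K IH =>
    intro m n t₁ t₂
    rw [show distF κ (K+1) t₁ t₂ =
      (andF (distF κ K (Term.var (Sum.inr (Fin.last n))) (t₁.liftAt 1 n))
            (distF κ K (Term.var (Sum.inr (Fin.last n))) (t₂.liftAt 1 n))).ex from rfl,
      qr_ex, qr_andF, IH, IH]
    simp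

theorem qr_guardF {K : ℕ} : qr (guardF κ m n K) ≤ K := by
  refine qr_bigOr_le fun f hf => ?_
  rcases List.mem_append.mp hf with hf | hf <;>
    obtain ⟨i, -, rfl⟩ := List.mem_map.mp hf <;>
    rw [qr_distF]

theorem qr_loc : ∀ {n : ℕ} (f : (colLang κ).BoundedFormula (Fin m) n),
    qr (loc f) = qr f := by
  intro n f
  induction f with
  | falsum => rfl
  | equal => rfl
  | rel => rfl
  | imp f g IHf IHg =>
    show max (qr (loc f)) (qr (loc g)) = _
    rw [IHf, IHg]; rfl
  | all f IH =>
    show qr (BoundedFormula.all ((guardF κ m _ (qr f)).imp (loc f))) = qr f + 1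
    show max (qr (guardF κ m _ (qr f))) (qr (loc f)) + 1 = qr f + 1
    rw [IH, max_eq_right qr_guardF]

theorem loc_not {f : (colLang κ).BoundedFormula (Fin m) n} :
    loc f.not = (loc f).not := rfl

theorem loc_andF {f g : (colLang κ).BoundedFormula (Fin m) n} :
    loc (andF f g) = andF (loc f) (loc g) := rfl

/-- Finite conjunction. -/
def bigAnd {n : ℕ} (l : List ((colLang κ).BoundedFormula (Fin m) n)) :
    (colLang κ).BoundedFormula (Fin m) n :=
  l.foldr andF (BoundedFormula.falsum.imp BoundedFormula.falsum)

theorem qr_bigAnd_le {l : List ((colLang κ).BoundedFormula (Fin m) n)} {K : ℕ}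
    (h : ∀ f ∈ l, qr f ≤ K) : qr (bigAnd l) ≤ K := by
  induction l with
  | nil => simp [bigAnd, qr]
  | cons f l IH =>
    show qr (andF f (bigAnd l)) ≤ K
    rw [qr_andF]
    exact max_le (h f (by simp)) (IH fun g hg => h g (by simp [hg]))

theorem loc_bigAnd {l : List ((colLang κ).BoundedFormula (Fin m) n)} :
    loc (bigAnd l) = bigAnd (l.map loc) := by
  induction l with
  | nil => rfl
  | cons f l IH =>
    show loc (andF f (bigAnd l)) = andF (loc f) (bigAnd (l.map loc))
    rw [loc_andF, IH]

theorem Rz_bigAnd {l : List ((colLang κ).BoundedFormula (Fin m) n)} {v xs} :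
    Rz G col (bigAnd l) v xs ↔ ∀ f ∈ l, Rz G col f v xs := by
  induction l with
  | nil =>
    show Rz G col (BoundedFormula.falsum.imp BoundedFormula.falsum) v xs ↔ _
    rw [Rz_imp]
    simp
  | cons f l IH =>
    show Rz G col (andF f (bigAnd l)) v xs ↔ _
    rw [Rz_andF, IH]
    simp

/-- An always-true formula of quantifier rank `k` with `m` bound variables. -/
def padF (κ : Type) {α : Type} : (k : ℕ) → (m : ℕ) → (colLang κ).BoundedFormula α m
  | 0, _ => BoundedFormula.falsum.imp BoundedFormula.falsum
  | (k + 1), m => (padF κ k (m + 1)).all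

theorem qr_padF {α : Type} : ∀ (k m : ℕ), qr (padF κ (α := α) k m) = k
  | 0, _ => by simp [padF, qr]
  | (k + 1), m => by
    show qr (padF κ k (m+1)) + 1 = k + 1
    rw [qr_padF k (m+1)]

theorem Rz_loc_padF : ∀ (k : ℕ) {m : ℕ} (v : Fin n → V) (xs : Fin m → V),
    Rz G col (loc (padF κ k m)) v xs
  | 0, _, v, xs => fun h => h
  | (k + 1), m, v, xs => by
    show Rz G col (BoundedFormula.all
      ((guardF κ n m (qr (padF κ k (m+1)))).imp (loc (padF κ k (m+1))))) v xs
    rw [Rz_all]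
    intro z
    rw [Rz_imp]
    intro _
    exact Rz_loc_padF k v _

/-! ### The game -/

theorem isPartialAuto_symm {a b : Fin n → V} (h : IsPartialAuto G col a b) :
    IsPartialAuto G col b a :=
  fun i j => ⟨(h i j).1.symm, fun c => ((h i j).2.1 c).symm, (h i j).2.2.symm⟩

theorem dWins_symm : ∀ (k : ℕ) {n : ℕ} (a b : Fin n → V),
    DWinsLocal G col k a b → DWinsLocal G col k b a
  | 0, _, a, b, h => isPartialAuto_symm G col h
  | (k + 1), _, a, b, h => by
    refine ⟨fun x hx => ?_, fun y hy => ?_⟩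
    · obtain ⟨y, hy, hw⟩ := h.2 x hx
      exact ⟨y, hy, dWins_symm k _ _ hw⟩
    · obtain ⟨x, hx, hw⟩ := h.1 y hy
      exact ⟨x, hx, dWins_symm k _ _ hw⟩

/-- The term picking out the `i`-th element of the combined tuple. -/
def tmL {n j : ℕ} (i : Fin (n + j)) : (colLang κ).Term (Fin n ⊕ Fin j) :=
  Term.var (Fin.append Sum.inl Sum.inr i)

theorem rt_tm {n j : ℕ} {i : Fin (n + j)} {v : Fin n → V} {xs : Fin j → V} :
    rt G col (tmL i) v xs = Fin.append v xs i := by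
  show Sum.elim v xs (Fin.append Sum.inl Sum.inr i) = Fin.append v xs i
  refine Fin.addCases (motive := fun i =>
    Sum.elim v xs (Fin.append Sum.inl Sum.inr i) = Fin.append v xs i)
    (fun i => ?_) (fun j => ?_) i
  · simp only [Fin.append_left]; rfl
  · simp only [Fin.append_right]; rfl

theorem base_case {n j : ℕ} (v w : Fin n → V) (xs ys : Fin j → V)
    (H : ∀ θ : (colLang κ).BoundedFormula (Fin n) j, qr θ ≤ 0 →
      (Rz G col (loc θ) v xs ↔ Rz G col (loc θ) w ys)) :
    IsPartialAuto G col (Fin.append v xs) (Fin.append w ys) := by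
  intro i i'
  refine ⟨?_, fun c => ?_, ?_⟩
  · have h1 : Rz G col (BoundedFormula.equal (tmL i) (tmL i')) v xs ↔
        Rz G col (BoundedFormula.equal (tmL i) (tmL i')) w ys :=
      H (BoundedFormula.equal (tmL i) (tmL i')) (le_of_eq rfl)
    rw [Rz_equal, Rz_equal, rt_tm, rt_tm, rt_tm, rt_tm] at h1
    exact h1
  · have h1 : Rz G col (BoundedFormula.rel (ColRel.color c) ![tmL i]) v xs ↔
        Rz G col (BoundedFormula.rel (ColRel.color c) ![tmL i]) w ys :=
      H (BoundedFormula.rel (ColRel.color c) ![tmL i]) (le_of_eq rfl)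
    rw [Rz_colorF, Rz_colorF, rt_tm, rt_tm] at h1
    exact h1
  · have h1 : Rz G col (adjF (tmL i) (tmL i')) v xs ↔
        Rz G col (adjF (tmL i) (tmL i')) w ys :=
      H (adjF (tmL i) (tmL i')) (le_of_eq rfl)
    rw [Rz_adjF, Rz_adjF, rt_tm, rt_tm, rt_tm, rt_tm] at h1
    exact h1

theorem exF_char {n j k : ℕ} (Θ : (colLang κ).BoundedFormula (Fin n) (j+1)) (hqΘ : qr Θ = k)
    (v : Fin n → V) (xs : Fin j → V) :
    Rz G col (loc (((Θ.imp BoundedFormula.falsum).all).imp BoundedFormula.falsum)) v xs ↔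
      ∃ z, inBallT G (Fin.append v xs) (2 ^ k) z ∧ Rz G col (loc Θ) v (Fin.snoc xs z) := by
  have hg : qr (Θ.imp BoundedFormula.falsum) = k := by
    show max (qr Θ) (qr (BoundedFormula.falsum : (colLang κ).BoundedFormula (Fin n) (j+1))) = k
    simp [qr, hqΘ]
  rw [show loc (((Θ.imp BoundedFormula.falsum).all).imp BoundedFormula.falsum) =
    ((BoundedFormula.all ((guardF κ n j (qr (Θ.imp BoundedFormula.falsum))).imp
      ((loc Θ).imp BoundedFormula.falsum))).imp BoundedFormula.falsum) from rfl, hg]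
  rw [Rz_imp]
  constructor
  · intro h
    by_contra hc
    push_neg at hc
    apply (Rz_falsum G col).mp
    apply h
    rw [Rz_all]
    intro z
    rw [Rz_imp, Rz_guardF]
    intro hz
    rw [Rz_imp]
    intro hΘz
    exact (Rz_falsum G col).mpr (hc z hz hΘz)
  · rintro ⟨z, hz, hΘz⟩ hall
    rw [Rz_all] at hall
    have h1 := hall z
    rw [Rz_imp, Rz_guardF] at h1
    have h2 := h1 hz
    rw [Rz_imp] at h2
    exact h2 hΘz

theorem step_one [Fintype V] (k : ℕ) {n j : ℕ}
    (IH : ∀ (v w : Fin n → V) (xs ys : Fin (j+1) → V),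
        (∀ θ : (colLang κ).BoundedFormula (Fin n) (j+1), qr θ ≤ k →
          (Rz G col (loc θ) v xs ↔ Rz G col (loc θ) w ys)) →
        DWinsLocal G col k (Fin.append v xs) (Fin.append w ys))
    (v w : Fin n → V) (xs ys : Fin j → V)
    (H : ∀ θ : (colLang κ).BoundedFormula (Fin n) j, qr θ ≤ k + 1 →
        (Rz G col (loc θ) v xs ↔ Rz G col (loc θ) w ys))
    (x : V) (hx : inBallT G (Fin.append v xs) (2 ^ k) x) :
    ∃ y : V, inBallT G (Fin.append w ys) (2 ^ k) y ∧
      DWinsLocal G col k (Fin.append v (Fin.snoc xs x)) (Fin.append w (Fin.snoc ys y)) := by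
  classical
  by_contra hno
  push_neg at hno
  have key : ∀ y : V, ∃ θ : (colLang κ).BoundedFormula (Fin n) (j+1),
      qr θ ≤ k ∧ Rz G col (loc θ) v (Fin.snoc xs x) ∧
      (inBallT G (Fin.append w ys) (2 ^ k) y → ¬ Rz G col (loc θ) w (Fin.snoc ys y)) := by
    intro y
    by_cases hy : inBallT G (Fin.append w ys) (2 ^ k) y
    · have hnw := hno y hy
      have hne : ¬ ∀ θ : (colLang κ).BoundedFormula (Fin n) (j+1), qr θ ≤ k →
          (Rz G col (loc θ) v (Fin.snoc xs x) ↔ Rz G col (loc θ) w (Fin.snoc ys y)) :=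
        fun hall => hnw (IH _ _ _ _ hall)
      push_neg at hne
      obtain ⟨θ, hq, hne⟩ := hne
      rcases hne with ⟨h1, h2⟩ | ⟨h1, h2⟩
      · exact ⟨θ, hq, h1, fun _ => h2⟩
      · refine ⟨θ.not, by rwa [qr_not], ?_, fun _ => ?_⟩
        · rw [loc_not, Rz_not]; exact h1
        · rw [loc_not, Rz_not]; exact fun hc => hc h2
    · refine ⟨padF κ 0 (j+1), Nat.zero_le k, fun hf => hf, fun hy2 => absurd hy2 hy⟩
  choose θf hθq hθv hθw using key
  set l : List ((colLang κ).BoundedFormula (Fin n) (j+1)) :=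
    (Finset.univ : Finset V).toList.map θf with hl
  set Θ : (colLang κ).BoundedFormula (Fin n) (j+1) := andF (padF κ k (j+1)) (bigAnd l) with hΘ
  have hqΘ : qr Θ = k := by
    rw [hΘ, qr_andF, qr_padF]
    refine max_eq_left (qr_bigAnd_le ?_)
    rintro f hf
    rw [hl] at hf
    obtain ⟨y, -, rfl⟩ := List.mem_map.mp hf
    exact hθq y
  have hΘreal : ∀ (v' : Fin n → V) (xs' : Fin j → V) (z : V),
      Rz G col (loc Θ) v' (Fin.snoc xs' z) ↔
        (Rz G col (loc (padF κ k (j+1))) v' (Fin.snoc xs' z) ∧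
         ∀ y : V, Rz G col (loc (θf y)) v' (Fin.snoc xs' z)) := by
    intro v' xs' z
    rw [hΘ, loc_andF, Rz_andF, loc_bigAnd, Rz_bigAnd]
    constructor
    · rintro ⟨h1, h2⟩
      refine ⟨h1, fun y => h2 (loc (θf y)) ?_⟩
      rw [hl]
      exact List.mem_map.mpr ⟨θf y, List.mem_map.mpr ⟨y, by simp, rfl⟩, rfl⟩
    · rintro ⟨h1, h2⟩
      refine ⟨h1, ?_⟩
      rintro f hf
      rw [hl] at hf
      obtain ⟨g, hg, rfl⟩ := List.mem_map.mp hf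
      obtain ⟨y, -, rfl⟩ := List.mem_map.mp hg
      exact h2 y
  have hq1 : qr (Θ.imp BoundedFormula.falsum) = k := by
    show max (qr Θ) (qr (BoundedFormula.falsum : (colLang κ).BoundedFormula (Fin n) (j+1))) = k
    rw [show qr (BoundedFormula.falsum : (colLang κ).BoundedFormula (Fin n) (j+1)) = 0 from rfl,
      Nat.max_zero]
    exact hqΘ
  have hqΨ : qr (((Θ.imp BoundedFormula.falsum).all).imp BoundedFormula.falsum) ≤ k + 1 := by
    show max (qr ((Θ.imp BoundedFormula.falsum).all))
      (qr (BoundedFormula.falsum : (colLang κ).BoundedFormula (Fin n) j)) ≤ k + 1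
    have h2 : qr ((Θ.imp BoundedFormula.falsum).all) = k + 1 := by
      show qr (Θ.imp BoundedFormula.falsum) + 1 = k + 1
      rw [hq1]
    rw [h2, show qr (BoundedFormula.falsum : (colLang κ).BoundedFormula (Fin n) j) = 0 from rfl,
      Nat.max_zero]
  have hΨ := H _ hqΨ
  have hL : Rz G col (loc (((Θ.imp BoundedFormula.falsum).all).imp BoundedFormula.falsum)) v xs :=
    (exF_char G col Θ hqΘ v xs).mpr
      ⟨x, hx, (hΘreal v xs x).mpr ⟨Rz_loc_padF G col k v _, fun y => hθv y⟩⟩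
  obtain ⟨z, hzball, hzΘ⟩ := (exF_char G col Θ hqΘ w ys).mp (hΨ.mp hL)
  exact hθw z hzball (((hΘreal w ys z).mp hzΘ).2 z)

theorem main_lemma [Fintype V] (k : ℕ) : ∀ {n j : ℕ} (v w : Fin n → V) (xs ys : Fin j → V),
    (∀ θ : (colLang κ).BoundedFormula (Fin n) j, qr θ ≤ k →
      (Rz G col (loc θ) v xs ↔ Rz G col (loc θ) w ys)) →
    DWinsLocal G col k (Fin.append v xs) (Fin.append w ys) := by
  induction k with
  | zero =>
    intro n j v w xs ys H
    exact base_case G col v w xs ys H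
  | succ k IHk =>
    intro n j v w xs ys H
    refine ⟨fun x hx => ?_, fun y hy => ?_⟩
    · obtain ⟨y, hy, hw⟩ :=
        step_one G col k (fun v' w' xs' ys' h' => IHk v' w' xs' ys' h') v w xs ys H x hx
      exact ⟨y, hy, by rwa [Fin.append_snoc, Fin.append_snoc] at hw⟩
    · obtain ⟨x, hx, hw⟩ :=
        step_one G col k (fun v' w' xs' ys' h' => IHk v' w' xs' ys' h') w v ys xs
          (fun θ hq => (H θ hq).symm) y hy
      refine ⟨x, hx, ?_⟩
      have hsym := dWins_symm G col k _ _ hw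
      rwa [Fin.append_snoc, Fin.append_snoc] at hsym

end LocalEFAux

/-- If the local `k`-types of the tuples `a` and `b` in `(G, col)` coincide,
then Duplicator has a winning strategy in the `k`-round local EF-game from
position `(G, a, b, k)`. -/
theorem dWinsLocal_of_localType_eq {V κ : Type} [Fintype V]
    (G : SimpleGraph V) (col : V → κ → Prop) {n : ℕ} (a b : Fin n → V) (k : ℕ)
    (h : ∀ φ : (colLang κ).Formula (Fin n), IsLocal φ → qr φ ≤ k →
      ((letI := colStruct G col; φ.Realize a) ↔
       (letI := colStruct G col; φ.Realize b))) :
    DWinsLocal G col k a b := by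
  have e : ∀ (c : Fin n → V), Fin.append c (default : Fin 0 → V) = c := by
    intro c
    funext i
    rw [Subsingleton.elim (default : Fin 0 → V) Fin.elim0, Fin.append_elim0]
    rfl
  have hm := LocalEFAux.main_lemma G col k a b (default : Fin 0 → V) default
    (fun θ hq => h (loc θ) ⟨θ, rfl⟩ (by rwa [LocalEFAux.qr_loc]))
  rwa [e, e] at hm
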